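/- If a family of projectors satisfies both time-reversal symmetry (P(-k) = Θ P(k) Θ^{-1}, Θ antiunitary) and space-reflection symmetry (P(-k) = R P(k) R^{-1}, R unitary, R^2=1), then its Berry curvature Ω_{μν}(k) = tr(P(k)[∂_μ P(k), ∂_ν P(k)]) vanishes identically. -/

import Mathlib

set_option linter.unusedSectionVars false
set_option maxHeartbeats 1000000

open scoped ComplexConjugate

local notation "⟪" x ", " y "⟫" => @inner ℂ _ _ x y

section BCaux
variable {H : Type*} [NormedAddCommGroup H] [InnerProductSpace ℂ H]

lemma aux_basis_change {V : Type*} [NormedAddCommGroup V] [InnerProductSpace ℂ V]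
    {n : ℕ} (e f : OrthonormalBasis (Fin n) ℂ V) (C : V →ₗ[ℂ] V) :
    ∑ i, ⟪e i, C (e i)⟫ = ∑ j, ⟪f j, C (f j)⟫ := by
  have h : ∀ i, ⟪e i, C (e i)⟫ = ∑ j, ⟪f j, e i⟫ * ⟪e i, C (f j)⟫ := by
    intro i
    calc ⟪e i, C (e i)⟫ = ⟪e i, C (∑ j, ⟪f j, e i⟫ • f j)⟫ := by rw [f.sum_repr']
    _ = ∑ j, ⟪f j, e i⟫ * ⟪e i, C (f j)⟫ := by
        rw [map_sum, inner_sum]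
        simp [inner_smul_right]
  rw [Finset.sum_congr rfl (fun i _ => h i), Finset.sum_comm]
  exact Finset.sum_congr rfl fun j _ => e.sum_inner_mul_inner (f j) (C (f j))

lemma aux_trace [CompleteSpace H] {ι : Type*} (b : HilbertBasis ι ℂ H)
    (Pk A : H →L[ℂ] H) (hproj : Pk ∘L Pk = Pk)
    (hsa : ContinuousLinearMap.adjoint Pk = Pk)
    [FiniteDimensional ℂ (LinearMap.range (Pk : H →ₗ[ℂ] H))] :
    ∑' i, ⟪b i, (Pk ∘L A) (b i)⟫ =
      ∑ j, ⟪((stdOrthonormalBasis ℂ (LinearMap.range (Pk : H →ₗ[ℂ] H)) j : H)),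
             A ((stdOrthonormalBasis ℂ (LinearMap.range (Pk : H →ₗ[ℂ] H)) j : H))⟫ := by
  set V := LinearMap.range (Pk : H →ₗ[ℂ] H) with hV
  set e := stdOrthonormalBasis ℂ V with he
  have hfix : ∀ y : V, Pk (y : H) = (y : H) := by
    rintro ⟨-, x, rfl⟩
    show Pk ((Pk : H →ₗ[ℂ] H) x) = (Pk : H →ₗ[ℂ] H) x
    simp only [ContinuousLinearMap.coe_coe]
    rw [← ContinuousLinearMap.comp_apply, hproj]
  have hPinner : ∀ x y : H, ⟪Pk x, y⟫ = ⟪x, Pk y⟫ := by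
    intro x y
    conv_lhs => rw [← hsa]
    rw [ContinuousLinearMap.adjoint_inner_left]
  have hexp : ∀ x : H, Pk x = ∑ j, ⟪(e j : H), x⟫ • (e j : H) := by
    intro x
    have hm : Pk x ∈ V := ⟨x, rfl⟩
    have h2 := congrArg (Subtype.val) (e.sum_repr' (⟨Pk x, hm⟩ : V))
    rw [Submodule.coe_sum] at h2
    simp only [Submodule.coe_smul, Submodule.coe_inner] at h2
    rw [← h2]
    refine Finset.sum_congr rfl fun j _ => ?_
    congr 1
    rw [← hPinner, hfix]
  have hterm : ∀ i, ⟪b i, (Pk ∘L A) (b i)⟫ =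
      ∑ j, ⟪ContinuousLinearMap.adjoint A (e j : H), b i⟫ * ⟪b i, (e j : H)⟫ := by
    intro i
    rw [ContinuousLinearMap.comp_apply, ← hPinner, hexp (b i), sum_inner]
    refine Finset.sum_congr rfl fun j _ => ?_
    rw [inner_smul_left, ContinuousLinearMap.adjoint_inner_left,
      ← inner_conj_symm ((e j : H)) (b i)]
    rw [Complex.conj_conj, mul_comm]
  rw [tsum_congr hterm, Summable.tsum_finsetSum (fun j _ => b.summable_inner_mul_inner _ _)]
  refine Finset.sum_congr rfl fun j _ => ?_
  rw [b.tsum_inner_mul_inner, ContinuousLinearMap.adjoint_inner_left]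

variable [CompleteSpace H] {d : ℕ}

lemma aux_fderiv_adjoint (P : EuclideanSpace ℝ (Fin d) → (H →L[ℂ] H)) (hP : ContDiff ℝ (⊤ : ℕ∞) P)
    (hsa : ∀ k, ContinuousLinearMap.adjoint (P k) = P k)
    (k v : EuclideanSpace ℝ (Fin d)) :
    ContinuousLinearMap.adjoint (fderiv ℝ P k v) = fderiv ℝ P k v := by
  symm
  rw [ContinuousLinearMap.eq_adjoint_iff]
  intro x y
  have hPd : HasFDerivAt P (fderiv ℝ P k) k :=
    ((hP.differentiable (by simp)) k).hasFDerivAt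
  let g1 : (H →L[ℂ] H) →L[ℝ] ℂ :=
    (Complex.conjCLE.toContinuousLinearMap.comp ((innerSL ℂ y).restrictScalars ℝ)).comp
      ((ContinuousLinearMap.apply ℂ H x).restrictScalars ℝ)
  let g2 : (H →L[ℂ] H) →L[ℝ] ℂ :=
    ((innerSL ℂ x).restrictScalars ℝ).comp ((ContinuousLinearMap.apply ℂ H y).restrictScalars ℝ)
  have hg1 : ∀ T : H →L[ℂ] H, g1 T = ⟪T x, y⟫ := by
    intro T
    simp only [g1, ContinuousLinearMap.comp_apply, ContinuousLinearMap.coe_restrictScalars',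
      ContinuousLinearMap.apply_apply, innerSL_apply_apply, ContinuousLinearEquiv.coe_coe,
      Complex.conjCLE_apply]
    exact inner_conj_symm _ _
  have hg2 : ∀ T : H →L[ℂ] H, g2 T = ⟪x, T y⟫ := by
    intro T
    simp only [g2, ContinuousLinearMap.comp_apply, ContinuousLinearMap.coe_restrictScalars',
      ContinuousLinearMap.apply_apply, innerSL_apply_apply]
  have h1 : HasFDerivAt (fun k' => g1 (P k')) (g1.comp (fderiv ℝ P k)) k :=
    g1.hasFDerivAt.comp k hPd
  have h2 : HasFDerivAt (fun k' => g2 (P k')) (g2.comp (fderiv ℝ P k)) k :=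
    g2.hasFDerivAt.comp k hPd
  have heq : (fun k' => g1 (P k')) = fun k' => g2 (P k') := by
    funext k'
    rw [hg1, hg2]
    conv_lhs => rw [← hsa k']
    rw [ContinuousLinearMap.adjoint_inner_left]
  rw [heq] at h1
  have hD : g1.comp (fderiv ℝ P k) = g2.comp (fderiv ℝ P k) := h1.unique h2
  have := congrFun (congrArg
    (fun (L : EuclideanSpace ℝ (Fin d) →L[ℝ] ℂ) => (L : EuclideanSpace ℝ (Fin d) → ℂ)) hD) v
  simp only [ContinuousLinearMap.comp_apply] at this
  rw [hg1, hg2] at this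
  exact this

lemma aux_fderiv_comm (P : EuclideanSpace ℝ (Fin d) → (H →L[ℂ] H)) (hP : ContDiff ℝ (⊤ : ℕ∞) P)
    (S : H →L[ℝ] H) (hSP : ∀ k' (x : H), S (P k' x) = P k' (S x))
    (k v : EuclideanSpace ℝ (Fin d)) (x : H) :
    S (fderiv ℝ P k v x) = fderiv ℝ P k v (S x) := by
  have hPd : HasFDerivAt P (fderiv ℝ P k) k :=
    ((hP.differentiable (by simp)) k).hasFDerivAt
  let g1 : (H →L[ℂ] H) →L[ℝ] H := S.comp ((ContinuousLinearMap.apply ℂ H x).restrictScalars ℝ)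
  let g2 : (H →L[ℂ] H) →L[ℝ] H := (ContinuousLinearMap.apply ℂ H (S x)).restrictScalars ℝ
  have hg1 : ∀ T : H →L[ℂ] H, g1 T = S (T x) := fun T => rfl
  have hg2 : ∀ T : H →L[ℂ] H, g2 T = T (S x) := fun T => rfl
  have h1 : HasFDerivAt (fun k' => g1 (P k')) (g1.comp (fderiv ℝ P k)) k :=
    g1.hasFDerivAt.comp k hPd
  have h2 : HasFDerivAt (fun k' => g2 (P k')) (g2.comp (fderiv ℝ P k)) k :=
    g2.hasFDerivAt.comp k hPd
  have heq : (fun k' => g1 (P k')) = fun k' => g2 (P k') := by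
    funext k'
    rw [hg1, hg2, hSP]
  rw [heq] at h1
  have hD : g1.comp (fderiv ℝ P k) = g2.comp (fderiv ℝ P k) := h1.unique h2
  have := congrFun (congrArg
    (fun (L : EuclideanSpace ℝ (Fin d) →L[ℝ] H) => (L : EuclideanSpace ℝ (Fin d) → H)) hD) v
  simpa only [ContinuousLinearMap.comp_apply, hg1, hg2] using this

end BCaux

/-- The Berry curvature `Ω_{μν}(k) = tr(P(k)[∂_μ P(k), ∂_ν P(k)])`, the trace being
computed in the orthonormal basis `b`. -/
noncomputable def berryCurvature {d : ℕ} {H : Type*} [NormedAddCommGroup H]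
    [InnerProductSpace ℂ H] {ι : Type*} (b : HilbertBasis ι ℂ H)
    (P : EuclideanSpace ℝ (Fin d) → (H →L[ℂ] H)) (μ ν : Fin d)
    (k : EuclideanSpace ℝ (Fin d)) : ℂ :=
  let D : Fin d → (H →L[ℂ] H) := fun α => fderiv ℝ P k (EuclideanSpace.single α 1)
  ∑' i, (inner ℂ (b i) (((P k) ∘L (D μ ∘L D ν - D ν ∘L D μ)) (b i)) : ℂ)

/-- For a smooth family of finite-rank orthogonal projections that is
both time-reversal symmetric (`Θ` antiunitary, `Θ² = ±1`, `P(-k) = ΘP(k)Θ⁻¹`) and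
space-reflection symmetric (`R` unitary, `R² = 1`, `P(-k) = R P(k) R⁻¹`), the Berry
curvature vanishes identically. -/
theorem berryCurvature_zero_of_TR_and_SR {d : ℕ} {H : Type*} [NormedAddCommGroup H]
    [InnerProductSpace ℂ H] [CompleteSpace H] {ι : Type*} (b : HilbertBasis ι ℂ H)
    (P : EuclideanSpace ℝ (Fin d) → (H →L[ℂ] H))
    (hP : ContDiff ℝ (⊤ : ℕ∞) P)
    (hproj : ∀ k, P k ∘L P k = P k)
    (hsa : ∀ k, ContinuousLinearMap.adjoint (P k) = P k)
    (hfin : ∀ k, FiniteDimensional ℂ (LinearMap.range (P k : H →ₗ[ℂ] H)))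
    (Θ Θinv : H → H)
    (hadd : ∀ x y : H, Θ (x + y) = Θ x + Θ y)
    (hsmul : ∀ (c : ℂ) (x : H), Θ (c • x) = (starRingEnd ℂ) c • Θ x)
    (hinner : ∀ x y : H, (inner ℂ (Θ x) (Θ y) : ℂ) = inner ℂ y x)
    (hΘinv₁ : ∀ x : H, Θ (Θinv x) = x)
    (hΘinv₂ : ∀ x : H, Θinv (Θ x) = x)
    (hΘ2 : (∀ x : H, Θ (Θ x) = x) ∨ (∀ x : H, Θ (Θ x) = -x))
    (hTR : ∀ (k : EuclideanSpace ℝ (Fin d)) (x : H), P (-k) x = Θ (P k (Θinv x)))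
    (R : H →L[ℂ] H)
    (hRu : ContinuousLinearMap.adjoint R ∘L R = 1)
    (hRu' : R ∘L ContinuousLinearMap.adjoint R = 1)
    (hR2 : R ∘L R = 1)
    (hSR : ∀ k : EuclideanSpace ℝ (Fin d), P (-k) = R ∘L P k ∘L R) :
    ∀ (k : EuclideanSpace ℝ (Fin d)) (μ ν : Fin d),
      berryCurvature b P μ ν k = 0 := by
  classical
  -- properties of Θinv
  have hΘinv_add : ∀ x y : H, Θinv (x + y) = Θinv x + Θinv y := by
    intro x y
    have h : Θ (Θinv x + Θinv y) = x + y := by rw [hadd, hΘinv₁, hΘinv₁]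
    rw [← h, hΘinv₂]
  have hΘinv_smul : ∀ (c : ℂ) (x : H), Θinv (c • x) = (starRingEnd ℂ) c • Θinv x := by
    intro c x
    have h : Θ ((starRingEnd ℂ) c • Θinv x) = c • x := by
      rw [hsmul, Complex.conj_conj, hΘinv₁]
    rw [← h, hΘinv₂]
  have hΘinv_inner : ∀ x y : H, ⟪Θinv x, Θinv y⟫ = ⟪y, x⟫ := by
    intro x y
    have h' := hinner (Θinv y) (Θinv x)
    rw [hΘinv₁, hΘinv₁] at h'
    exact h'.symm
  -- the combined antiunitary symmetry S = Θ⁻¹ ∘ R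
  set S : H → H := fun x => Θinv (R x) with hS
  have hSinner : ∀ x y : H, ⟪S x, S y⟫ = ⟪y, x⟫ := by
    intro x y
    show ⟪Θinv (R x), Θinv (R y)⟫ = ⟪y, x⟫
    rw [hΘinv_inner]
    rw [← ContinuousLinearMap.adjoint_inner_right R y (R x), ← ContinuousLinearMap.comp_apply,
      hRu, ContinuousLinearMap.one_apply]
  have hSnorm : ∀ x : H, ‖S x‖ = ‖x‖ := by
    intro x
    rw [norm_eq_sqrt_re_inner (𝕜 := ℂ) (S x), norm_eq_sqrt_re_inner (𝕜 := ℂ) x, hSinner x x]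
  have hSadd : ∀ x y : H, S (x + y) = S x + S y := by
    intro x y
    show Θinv (R (x + y)) = Θinv (R x) + Θinv (R y)
    rw [map_add, hΘinv_add]
  have hSsmulR : ∀ (r : ℝ) (x : H), S (r • x) = r • S x := by
    intro r x
    show Θinv (R (r • x)) = r • Θinv (R x)
    rw [← Complex.coe_smul, map_smul, hΘinv_smul, Complex.conj_ofReal, Complex.coe_smul]
  -- S as a continuous ℝ-linear map
  let Slm : H →ₗ[ℝ] H :=
    { toFun := S, map_add' := hSadd, map_smul' := hSsmulR }
  let Scl : H →L[ℝ] H := Slm.mkContinuous 1 (fun x => by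
    rw [one_mul]; exact le_of_eq (hSnorm x))
  have hScl : ∀ x : H, Scl x = S x := fun _ => rfl
  -- S commutes with every P k'
  have hSP : ∀ (k' : EuclideanSpace ℝ (Fin d)) (x : H), S (P k' x) = P k' (S x) := by
    intro k' x
    have h0 : R (P k' (R (R x))) = Θ (P k' (Θinv (R x))) := by
      have h1 := hTR k' (R x)
      have h2 := congrFun (congrArg (fun (T : H →L[ℂ] H) => (T : H → H)) (hSR k')) (R x)
      simp only [ContinuousLinearMap.coe_comp', Function.comp_apply] at h2
      rw [← h2, h1]
    have hRR : R (R x) = x := by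
      rw [← ContinuousLinearMap.comp_apply, hR2, ContinuousLinearMap.one_apply]
    rw [hRR] at h0
    show Θinv (R (P k' x)) = P k' (S x)
    rw [h0, hΘinv₂]
  have hSPcl : ∀ (k' : EuclideanSpace ℝ (Fin d)) (x : H), Scl (P k' x) = P k' (Scl x) := by
    intro k' x; rw [hScl, hScl]; exact hSP k' x
  intro k μ ν
  haveI := hfin k
  set D : Fin d → (H →L[ℂ] H) := fun α => fderiv ℝ P k (EuclideanSpace.single α 1) with hD
  set A : H →L[ℂ] H := D μ ∘L D ν - D ν ∘L D μ with hA
  -- derivative facts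
  have hDsa : ∀ α, ContinuousLinearMap.adjoint (D α) = D α := fun α =>
    aux_fderiv_adjoint P hP hsa k _
  have hDS : ∀ α (x : H), S (D α x) = D α (S x) := by
    intro α x
    have := aux_fderiv_comm P hP Scl hSPcl k (EuclideanSpace.single α 1) x
    rw [hScl, hScl] at this
    exact this
  have hSA : ∀ x : H, S (A x) = A (S x) := by
    intro x
    have hsub : ∀ u w : H, S (u - w) = S u - S w := by
      intro u w
      rw [← hScl, ← hScl, ← hScl, map_sub]
    rw [hA]
    simp only [ContinuousLinearMap.sub_apply, ContinuousLinearMap.comp_apply]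
    rw [hsub, hDS, hDS, hDS, hDS]
  have hAadj : ContinuousLinearMap.adjoint A = -A := by
    rw [hA, map_sub, ContinuousLinearMap.adjoint_comp, ContinuousLinearMap.adjoint_comp,
      hDsa, hDsa, neg_sub]
  -- reduce the Berry curvature to a finite trace
  have hBC : berryCurvature b P μ ν k = ∑' i, ⟪b i, ((P k) ∘L A) (b i)⟫ := rfl
  set V := LinearMap.range ((P k : H →ₗ[ℂ] H)) with hV
  set e := stdOrthonormalBasis ℂ V with he
  rw [hBC, aux_trace b (P k) A (hproj k) (hsa k)]
  set τ := ∑ j, ⟪(e j : H), A (e j : H)⟫ with hτ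
  show τ = 0
  -- basic facts about P k and V
  have hfix : ∀ y : V, P k (y : H) = (y : H) := by
    rintro ⟨-, x, rfl⟩
    show P k ((P k : H →ₗ[ℂ] H) x) = (P k : H →ₗ[ℂ] H) x
    simp only [ContinuousLinearMap.coe_coe]
    rw [← ContinuousLinearMap.comp_apply, hproj]
  have hPinner : ∀ x y : H, ⟪P k x, y⟫ = ⟪x, P k y⟫ := by
    intro x y
    conv_lhs => rw [← hsa k]
    rw [ContinuousLinearMap.adjoint_inner_left]
  have hmemS : ∀ y : V, S (y : H) ∈ V := by
    intro y
    refine ⟨S (y : H), ?_⟩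
    show P k (S (y : H)) = S (y : H)
    rw [← hSP k (y : H), hfix]
  have hfixS : ∀ y : V, P k (S (y : H)) = S (y : H) := by
    intro y
    rw [← hSP k (y : H), hfix]
  -- the compression of P A P to V
  have hmemPA : ∀ x : H, P k (A x) ∈ V := fun x => ⟨A x, rfl⟩
  let C : V →ₗ[ℂ] V :=
    { toFun := fun y => ⟨P k (A (y : H)), hmemPA (y : H)⟩
      map_add' := by
        intro y z
        apply Subtype.ext
        simp [map_add]
      map_smul' := by
        intro c y
        apply Subtype.ext
        simp [map_smul] }
  have hCe : ∀ i, ⟪e i, C (e i)⟫ = ⟪(e i : H), A (e i : H)⟫ := by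
    intro i
    rw [Submodule.coe_inner]
    show ⟪(e i : H), P k (A (e i : H))⟫ = ⟪(e i : H), A (e i : H)⟫
    rw [← hPinner, hfix]
  -- case on the rank
  by_cases hn : Nonempty (Fin (Module.finrank ℂ V))
  · -- the transformed orthonormal basis f = S ∘ e
    let f : Fin (Module.finrank ℂ V) → V := fun j => ⟨S (e j : H), hmemS (e j)⟩
    have hforth : Orthonormal ℂ f := by
      rw [orthonormal_iff_ite]
      intro i j
      have h1 : ⟪f i, f j⟫ = ⟪S (e i : H), S (e j : H)⟫ := Submodule.coe_inner _ _ _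
      rw [h1, hSinner, ← Submodule.coe_inner, orthonormal_iff_ite.mp e.orthonormal]
      by_cases h : i = j
      · subst h; simp
      · simp [h, Ne.symm h]
    have hcard : Fintype.card (Fin (Module.finrank ℂ V)) = Module.finrank ℂ V :=
      Fintype.card_fin _
    let fb : Module.Basis (Fin (Module.finrank ℂ V)) ℂ V :=
      basisOfOrthonormalOfCardEqFinrank hforth hcard
    have hfb : ⇑fb = f := coe_basisOfOrthonormalOfCardEqFinrank hforth hcard
    let fONB : OrthonormalBasis (Fin (Module.finrank ℂ V)) ℂ V :=
      fb.toOrthonormalBasis (by rw [hfb]; exact hforth)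
    have hfONB : ⇑fONB = f := by
      rw [Module.Basis.coe_toOrthonormalBasis, hfb]
    have hCf : ∀ j, ⟪f j, C (f j)⟫ = (starRingEnd ℂ) ⟪(e j : H), A (e j : H)⟫ := by
      intro j
      rw [Submodule.coe_inner]
      show ⟪S (e j : H), P k (A (S (e j : H)))⟫ = _
      rw [← hPinner, hfixS, ← hSA, hSinner]
      exact (inner_conj_symm _ _).symm
    -- τ is conj-invariant
    have h1 : τ = (starRingEnd ℂ) τ := by
      have step1 : τ = ∑ i, ⟪e i, C (e i)⟫ := by
        rw [hτ]
        exact (Finset.sum_congr rfl fun i _ => (hCe i).symm)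
      have step2 : ∑ i, ⟪e i, C (e i)⟫ = ∑ j, ⟪fONB j, C (fONB j)⟫ :=
        aux_basis_change e fONB C
      have step3 : ∑ j, ⟪fONB j, C (fONB j)⟫ = ∑ j, (starRingEnd ℂ) ⟪(e j : H), A (e j : H)⟫ := by
        refine Finset.sum_congr rfl fun j _ => ?_
        rw [hfONB]
        exact hCf j
      refine step1.trans (step2.trans (step3.trans ?_))
      rw [hτ, map_sum]
    -- τ is anti-conj-invariant
    have hterm2 : ∀ j, (starRingEnd ℂ) ⟪(e j : H), A (e j : H)⟫ =
        -⟪(e j : H), A (e j : H)⟫ := by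
      intro j
      rw [inner_conj_symm, ← ContinuousLinearMap.adjoint_inner_right, hAadj,
        ContinuousLinearMap.neg_apply, inner_neg_right]
    have h2 : (starRingEnd ℂ) τ = -τ := by
      rw [hτ, map_sum, Finset.sum_congr rfl (fun j _ => hterm2 j)]
      exact Finset.sum_neg_distrib _
    have h3 : τ = -τ := h1.trans h2
    linear_combination h3 / 2
  · -- rank zero: the sum is empty
    haveI : IsEmpty (Fin (Module.finrank ℂ V)) := not_nonempty_iff.mp hn
    rw [hτ, Finset.univ_eq_empty, Finset.sum_empty]
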